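/- If λ ∈ Γ⁺_k, then for each i the truncated tuple Λ_i (λ with the i-th entry removed) lies in Γ⁺_{k-1}(ℝ^{n-1}), i.e., σ_l(Λ_i) > 0 for all 1 ≤ l ≤ k-1. -/

import Mathlib

open Finset

noncomputable def esymm (n k : ℕ) (lam : Fin n → ℝ) : ℝ :=
  ∑ s ∈ Finset.univ.powersetCard k, ∏ i ∈ s, lam i

def gammaPlus (n k : ℕ) : Set (Fin n → ℝ) :=
  {lam | ∀ i, 1 ≤ i → i ≤ k → 0 < esymm n i lam}

/-- σ_k(Λ_i): elementary symmetric polynomial of λ with the i-th entry deleted. -/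
noncomputable def esymmErase (n k : ℕ) (i : Fin n) (lam : Fin n → ℝ) : ℝ :=
  ∑ s ∈ (Finset.univ.erase i).powersetCard k, ∏ j ∈ s, lam j

lemma esymm_zero (N : ℕ) (lam : Fin N → ℝ) : esymm N 0 lam = 1 := by
  simp [esymm, powersetCard_zero]

lemma esymmErase_zero (N : ℕ) (i : Fin N) (lam : Fin N → ℝ) : esymmErase N 0 i lam = 1 := by
  simp [esymmErase, powersetCard_zero]

lemma esymm_of_gt {N k : ℕ} (h : N < k) (lam : Fin N → ℝ) : esymm N k lam = 0 := by
  have : (univ : Finset (Fin N)).powersetCard k = ∅ := by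
    apply powersetCard_eq_empty.2
    simpa using h
  simp [esymm, this]

lemma esymm_split (N l : ℕ) (i : Fin N) (lam : Fin N → ℝ) :
    esymm N (l + 1) lam = esymmErase N (l + 1) i lam + lam i * esymmErase N l i lam := by
  classical
  have hins : (univ : Finset (Fin N)) = insert i (univ.erase i) :=
    (insert_erase (mem_univ i)).symm
  have hnotmem : i ∉ (univ : Finset (Fin N)).erase i := notMem_erase i univ
  rw [esymm]
  rw [show (univ : Finset (Fin N)).powersetCard (l+1)
      = ((univ.erase i).powersetCard (l+1)) ∪
        ((univ.erase i).powersetCard l).image (insert i) by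
    conv_lhs => rw [hins]
    exact powersetCard_succ_insert hnotmem l]
  rw [sum_union]
  · congr 1
    rw [sum_image]
    · rw [esymmErase, mul_sum]
      refine sum_congr rfl fun s hs => ?_
      have his : i ∉ s := fun h => hnotmem ((mem_powersetCard.1 hs).1 h)
      rw [prod_insert his]
    · intro s hs t ht hst
      have his : i ∉ s := fun h => hnotmem ((mem_powersetCard.1 hs).1 h)
      have hit : i ∉ t := fun h => hnotmem ((mem_powersetCard.1 ht).1 h)
      have := congrArg (fun u => u.erase i) hst
      simpa [erase_insert his, erase_insert hit] using this
  · rw [disjoint_left]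
    intro s hs hs'
    obtain ⟨t, ht, rfl⟩ := mem_image.1 hs'
    have : i ∉ insert i t := fun h => hnotmem ((mem_powersetCard.1 hs).1 h)
    exact this (mem_insert_self i t)

lemma sum_mul_esymmErase (N k : ℕ) (lam : Fin N → ℝ) :
    ∑ j : Fin N, lam j * esymmErase N k j lam = (k + 1 : ℝ) * esymm N (k + 1) lam := by
  classical
  have lhs_eq : ∑ j : Fin N, lam j * esymmErase N k j lam
      = ∑ x ∈ (univ : Finset (Fin N)).sigma (fun j => (univ.erase j).powersetCard k),
          lam x.1 * ∏ y ∈ x.2, lam y := by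
    rw [sum_sigma]
    refine sum_congr rfl fun j _ => ?_
    rw [esymmErase, mul_sum]
  have rhs_eq : ∑ x ∈ ((univ : Finset (Fin N)).powersetCard (k+1)).sigma (fun u => u),
          lam x.2 * ∏ y ∈ x.1.erase x.2, lam y
      = (k + 1 : ℝ) * esymm N (k + 1) lam := by
    rw [sum_sigma, esymm, mul_sum]
    refine sum_congr rfl fun u hu => ?_
    have hcard : u.card = k + 1 := (mem_powersetCard.1 hu).2
    have : ∀ j ∈ u, lam j * ∏ y ∈ u.erase j, lam y = ∏ y ∈ u, lam y := fun j hj =>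
      mul_prod_erase u lam hj
    rw [sum_congr rfl this, sum_const, hcard]
    ring
  rw [lhs_eq, ← rhs_eq]
  refine sum_bij' (fun x _ => (⟨insert x.1 x.2, x.1⟩ : Σ _ : Finset (Fin N), Fin N))
    (fun x _ => (⟨x.2, x.1.erase x.2⟩ : Σ _ : Fin N, Finset (Fin N)))
    ?_ ?_ ?_ ?_ ?_
  · rintro ⟨j, s⟩ hx
    simp only [mem_sigma, mem_univ, true_and] at hx ⊢
    obtain ⟨hs, hc⟩ := mem_powersetCard.1 hx
    have hjs : j ∉ s := fun h => (notMem_erase j univ) (hs h)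
    constructor
    · exact mem_powersetCard.2 ⟨subset_univ _, by rw [card_insert_of_notMem hjs, hc]⟩
    · exact mem_insert_self j s
  · rintro ⟨u, j⟩ hx
    simp only [mem_sigma, mem_univ, true_and] at hx ⊢
    obtain ⟨hu, hj⟩ := hx
    obtain ⟨hsub, hc⟩ := mem_powersetCard.1 hu
    refine mem_powersetCard.2 ⟨fun y hy => mem_erase.2 ⟨(mem_erase.1 hy).1, mem_univ y⟩, ?_⟩
    rw [card_erase_of_mem hj, hc]
    omega
  · rintro ⟨j, s⟩ hx
    simp only [mem_sigma, mem_univ, true_and] at hx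
    have hjs : j ∉ s := fun h => (notMem_erase j univ) ((mem_powersetCard.1 hx).1 h)
    simp [erase_insert hjs]
  · rintro ⟨u, j⟩ hx
    simp only [mem_sigma] at hx
    simp [insert_erase hx.2]
  · rintro ⟨j, s⟩ hx
    simp only [mem_sigma, mem_univ, true_and] at hx
    have hjs : j ∉ s := fun h => (notMem_erase j univ) ((mem_powersetCard.1 hx).1 h)
    simp [erase_insert hjs]

lemma esymmErase_eq_esymm (n l : ℕ) (i : Fin (n+1)) (lam : Fin (n+1) → ℝ) :
    esymmErase (n+1) l i lam = esymm n l (lam ∘ i.succAbove) := by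
  classical
  have hmap : (univ : Finset (Fin (n+1))).erase i = univ.map i.succAboveEmb := by
    ext j
    simp only [mem_erase, mem_univ, and_true, mem_map, Fin.coe_succAboveEmb]
    constructor
    · intro h
      obtain ⟨z, hz⟩ := Fin.exists_succAbove_eq h
      exact ⟨z, trivial, hz⟩
    · rintro ⟨z, _, rfl⟩
      exact Fin.succAbove_ne i z
  rw [esymmErase, hmap, powersetCard_map, sum_map, esymm]
  refine sum_congr rfl fun s _ => ?_
  rw [RelEmbedding.coe_toEmbedding, mapEmbedding_apply, prod_map]
  rfl

lemma count_supersets {N j l : ℕ} (hjl : j ≤ l) (u : Finset (Fin N)) (hu : u.card = j) :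
    ((univ.powersetCard l).filter (fun s => u ⊆ s)).card = (N - j).choose (l - j) := by
  classical
  have : ((univ.powersetCard l).filter (fun s => u ⊆ s)).card
      = ((univ \ u).powersetCard (l - j)).card := by
    refine card_bij' (fun s _ => s \ u) (fun w _ => w ∪ u) ?_ ?_ ?_ ?_
    · intro s hs
      obtain ⟨hsl, hus⟩ := mem_filter.1 hs
      obtain ⟨-, hcard⟩ := mem_powersetCard.1 hsl
      refine mem_powersetCard.2 ⟨sdiff_subset_sdiff (subset_univ s) le_rfl, ?_⟩
      rw [card_sdiff_of_subset hus, hcard, hu]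
    · intro w hw
      obtain ⟨hwsub, hwcard⟩ := mem_powersetCard.1 hw
      have hdisj : Disjoint w u := by
        refine disjoint_left.2 fun a haw hau => ?_
        exact (mem_sdiff.1 (hwsub haw)).2 hau
      refine mem_filter.2 ⟨mem_powersetCard.2 ⟨subset_univ _, ?_⟩, subset_union_right⟩
      rw [card_union_of_disjoint hdisj, hwcard, hu]
      omega
    · intro s hs
      exact sdiff_union_of_subset (mem_filter.1 hs).2
    · intro w hw
      have hdisj : Disjoint w u := by
        refine disjoint_left.2 fun a haw hau => ?_
        exact (mem_sdiff.1 ((mem_powersetCard.1 hw).1 haw)).2 hau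
      exact union_sdiff_cancel_right hdisj
  rw [this, card_powersetCard, card_sdiff_of_subset (subset_univ u), card_univ, Fintype.card_fin, hu]

lemma esymm_shift (N l : ℕ) (ν : Fin N → ℝ) (t : ℝ) :
    esymm N l (fun x => ν x + t)
      = ∑ j ∈ Finset.range (l + 1), ((N - j).choose (l - j) : ℝ) * esymm N j ν * t ^ (l - j) := by
  classical
  have step1 : esymm N l (fun x => ν x + t)
      = ∑ s ∈ (univ : Finset (Fin N)).powersetCard l,
          ∑ j ∈ Finset.range (l + 1), ∑ u ∈ s.powersetCard j, (∏ x ∈ u, ν x) * t ^ (l - j) := by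
    rw [esymm]
    refine sum_congr rfl fun s hs => ?_
    obtain ⟨-, hcard⟩ := mem_powersetCard.1 hs
    rw [prod_add]
    rw [← hcard]
    rw [sum_powerset s (fun u => (∏ x ∈ u, ν x) * ∏ x ∈ s \ u, t)]
    refine sum_congr rfl fun j _ => sum_congr rfl fun u hu => ?_
    obtain ⟨hus, hucard⟩ := mem_powersetCard.1 hu
    rw [prod_const, card_sdiff_of_subset hus, hucard]
  rw [step1, sum_comm]
  refine sum_congr rfl fun j hj => ?_
  have hjl : j ≤ l := Nat.lt_succ_iff.1 (Finset.mem_range.1 hj)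
  have step2 : ∑ s ∈ (univ : Finset (Fin N)).powersetCard l,
        ∑ u ∈ s.powersetCard j, (∏ x ∈ u, ν x) * t ^ (l - j)
      = ∑ u ∈ (univ : Finset (Fin N)).powersetCard j,
        ∑ _s ∈ (univ.powersetCard l).filter (fun s => u ⊆ s), (∏ x ∈ u, ν x) * t ^ (l - j) := by
    refine sum_comm' ?_
    intro s u
    simp only [mem_powersetCard, mem_filter, subset_univ, true_and]
    tauto
  rw [step2, esymm]
  rw [sum_congr rfl (fun u hu => by
    rw [sum_const, count_supersets hjl u (mem_powersetCard.1 hu).2, nsmul_eq_mul])]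
  rw [← mul_sum, ← sum_mul, mul_assoc]

lemma continuous_esymmErase_shift (N l : ℕ) (i : Fin N) (ν : Fin N → ℝ) :
    Continuous (fun t : ℝ => esymmErase N l i (fun x => ν x + t)) := by
  unfold esymmErase
  exact continuous_finset_sum _ fun s _ =>
    continuous_finset_prod _ fun x _ => continuous_const.add continuous_id

lemma esymm_shift_pos {N l : ℕ} (hl : l ≤ N) {ν : Fin N → ℝ} {t : ℝ}
    (hnn : ∀ j, j ≤ l → 0 ≤ esymm N j ν)
    (hstr : 0 < t ∨ (0 ≤ t ∧ 0 < esymm N l ν)) :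
    0 < esymm N l (fun x => ν x + t) := by
  have ht0 : 0 ≤ t := by rcases hstr with h | h; exacts [h.le, h.1]
  rw [esymm_shift]
  apply sum_pos'
  · intro j hj
    have hjl : j ≤ l := by simpa [Nat.lt_succ_iff] using mem_range.1 hj
    have := hnn j hjl
    positivity
  · rcases hstr with ht | ⟨-, hpos⟩
    · refine ⟨0, mem_range.2 (by omega), ?_⟩
      have hc : 0 < ((N - 0).choose (l - 0) : ℝ) := by
        have := Nat.choose_pos (by omega : l - 0 ≤ N - 0)
        exact_mod_cast this
      rw [esymm_zero]
      have : 0 < t ^ (l - 0) := pow_pos ht _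
      nlinarith
    · refine ⟨l, mem_range.2 (by omega), ?_⟩
      simp [Nat.sub_self]
      nlinarith [hpos]

/-- The statement of the main theorem in dimension `n`. -/
def ErasePos (n : ℕ) : Prop :=
  ∀ k, 1 ≤ k → k ≤ n → ∀ lam ∈ gammaPlus n k, ∀ i : Fin n,
    ∀ l, 1 ≤ l → l ≤ k - 1 → 0 < esymmErase n l i lam

/-- The key "Newton-substitute" lemma: if all lower σ's are positive and σ_{k-1}(ν) = 0,
then σ_k(ν) ≤ 0, assuming the main statement holds in dimension m. -/
lemma key_lemma (m k : ℕ) (hk : 2 ≤ k) (hT : ErasePos m) (ν : Fin m → ℝ)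
    (hpos : ∀ j, 1 ≤ j → j ≤ k - 2 → 0 < esymm m j ν)
    (hzero : esymm m (k - 1) ν = 0) : esymm m k ν ≤ 0 := by
  by_contra hcon
  push_neg at hcon
  have hkm : k ≤ m := by
    by_contra hgt
    push_neg at hgt
    rw [esymm_of_gt hgt] at hcon
    exact lt_irrefl 0 hcon
  have hnn : ∀ j, j ≤ k → 0 ≤ esymm m j ν := by
    intro j hj
    rcases Nat.eq_zero_or_pos j with rfl | hj0
    · rw [esymm_zero]; norm_num
    · rcases eq_or_lt_of_le hj with rfl | hjk
      · exact hcon.le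
      · rcases Nat.lt_or_ge j (k - 1) with hlt | hge
        · exact (hpos j hj0 (by omega)).le
        · have : j = k - 1 := by omega
          rw [this, hzero]
  have hray : ∀ t : ℝ, 0 < t → (fun x => ν x + t) ∈ gammaPlus m k := by
    intro t ht j hj1 hjk
    exact esymm_shift_pos (le_trans hjk hkm) (fun j' hj' => hnn j' (le_trans hj' hjk)) (Or.inl ht)
  have hE : ∀ l, 1 ≤ l → l ≤ k - 1 → ∀ j : Fin m, 0 ≤ esymmErase m l j ν := by
    intro l hl1 hl2 j
    have hcont := continuous_esymmErase_shift m l j ν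
    have hcont0 : Filter.Tendsto (fun t : ℝ => esymmErase m l j (fun x => ν x + t))
        (nhdsWithin 0 (Set.Ioi 0)) (nhds (esymmErase m l j ν)) := by
      have h0 : esymmErase m l j (fun x => ν x + 0) = esymmErase m l j ν := by
        congr 1
        funext x
        ring
      have := hcont.tendsto 0
      rw [h0] at this
      exact this.mono_left nhdsWithin_le_nhds
    refine ge_of_tendsto hcont0 ?_
    filter_upwards [self_mem_nhdsWithin] with t ht
    exact (hT k (by omega) hkm _ (hray t ht) j l hl1 hl2).le
  have hjsign : ∀ j : Fin m, ν j * esymmErase m (k - 1) j ν ≤ 0 := by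
    intro j
    have hsplit := esymm_split m (k - 2) j ν
    have hk2 : k - 2 + 1 = k - 1 := by omega
    rw [hk2, hzero] at hsplit
    have hE1 : 0 ≤ esymmErase m (k - 1) j ν := hE (k - 1) (by omega) le_rfl j
    have hE2 : 0 ≤ esymmErase m (k - 2) j ν := by
      rcases Nat.eq_zero_or_pos (k - 2) with h0 | hpos2
      · rw [h0, esymmErase_zero]; norm_num
      · exact hE (k - 2) hpos2 (by omega) j
    rcases eq_or_lt_of_le hE2 with heq | hlt
    · have : esymmErase m (k - 1) j ν = 0 := by
        rw [← heq] at hsplit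
        linarith
      rw [this, mul_zero]
    · have hνj : ν j ≤ 0 := by nlinarith
      exact mul_nonpos_of_nonpos_of_nonneg hνj hE1
  have hsum : ∑ j : Fin m, ν j * esymmErase m (k - 1) j ν = (k : ℝ) * esymm m k ν := by
    have := sum_mul_esymmErase m (k - 1) ν
    have hk1 : k - 1 + 1 = k := by omega
    rw [hk1] at this
    rw [this]
    congr 1
    exact_mod_cast congrArg (Nat.cast : ℕ → ℝ) hk1
  have hle : (k : ℝ) * esymm m k ν ≤ 0 := by
    rw [← hsum]
    exact sum_nonpos fun j _ => hjsign j
  have hkpos : (0 : ℝ) < k := by positivity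
  nlinarith

lemma erasePos_all : ∀ n, ErasePos n := by
  intro n
  induction n using Nat.strong_induction_on with
  | _ n IH =>
  have hQ : ∀ k, k ≤ n → 2 ≤ k → ∀ lam ∈ gammaPlus n k, ∀ i : Fin n,
      0 < esymmErase n (k - 1) i lam := by
    intro k
    induction k using Nat.strong_induction_on with
    | _ k IHk =>
    intro hkn hk2 lam hlam i
    by_contra hneg
    push_neg at hneg
    obtain ⟨n', rfl⟩ : ∃ n', n = n' + 1 := ⟨n - 1, by omega⟩
    set g : ℝ → ℝ := fun t => esymmErase (n' + 1) (k - 1) i (fun x => lam x + t) with hg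
    have hcont := continuous_esymmErase_shift (n' + 1) (k - 1) i lam
    have hg0 : g 0 ≤ 0 := by
      have h0 : (fun x => lam x + (0:ℝ)) = lam := by funext x; ring
      rw [hg]
      simp only [h0]
      exact hneg
    set M : ℝ := (∑ x : Fin (n' + 1), |lam x|) + 1 with hM
    have hMpos : 0 < M := by
      rw [hM]
      have : 0 ≤ ∑ x : Fin (n' + 1), |lam x| := sum_nonneg fun x _ => abs_nonneg _
      linarith
    have hlamM : ∀ x : Fin (n' + 1), 0 < lam x + M := by
      intro x
      have h1 : |lam x| ≤ ∑ y : Fin (n' + 1), |lam y| :=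
        single_le_sum (fun y _ => abs_nonneg (lam y)) (mem_univ x)
      have h2 : -lam x ≤ |lam x| := neg_le_abs _
      rw [hM]
      linarith
    have hgM : 0 < g M := by
      rw [hg]
      simp only
      rw [esymmErase]
      apply sum_pos
      · intro s hs
        exact prod_pos fun x _ => hlamM x
      · apply powersetCard_nonempty_of_le
        rw [card_erase_of_mem (mem_univ i), card_univ, Fintype.card_fin]
        omega
    obtain ⟨t0, ht0mem, hgt0⟩ : ∃ t0 ∈ Set.Icc (0:ℝ) M, g t0 = 0 := by
      have := intermediate_value_Icc hMpos.le hcont.continuousOn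
      exact this ⟨hg0, hgM.le⟩
    set μ : Fin (n' + 1) → ℝ := fun x => lam x + t0 with hμ
    have ht00 : 0 ≤ t0 := ht0mem.1
    have hμΓ : μ ∈ gammaPlus (n' + 1) k := by
      intro j hj1 hjk
      refine esymm_shift_pos (by omega) (fun j' hj' => ?_) (Or.inr ⟨ht00, hlam j hj1 hjk⟩)
      rcases Nat.eq_zero_or_pos j' with rfl | hj'0
      · rw [esymm_zero]; norm_num
      · exact (hlam j' hj'0 (le_trans hj' hjk)).le
    have hμlow : ∀ l, 1 ≤ l → l ≤ k - 2 → 0 < esymmErase (n' + 1) l i μ := by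
      intro l hl1 hl2
      have hμΓ' : μ ∈ gammaPlus (n' + 1) (l + 1) := fun j hj1 hj2 =>
        hμΓ j hj1 (by omega)
      have := IHk (l + 1) (by omega) (by omega) (by omega) μ hμΓ' i
      simpa using this
    set ν : Fin n' → ℝ := μ ∘ i.succAbove with hν
    have hzero : esymm n' (k - 1) ν = 0 := by
      rw [← esymmErase_eq_esymm]
      exact hgt0
    have hposν : ∀ j, 1 ≤ j → j ≤ k - 2 → 0 < esymm n' j ν := by
      intro j hj1 hj2
      rw [← esymmErase_eq_esymm]
      exact hμlow j hj1 hj2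
    have hkey := key_lemma n' k hk2 (IH n' (by omega)) ν hposν hzero
    have hsplitk := esymm_split (n' + 1) (k - 1) i μ
    have hk1 : k - 1 + 1 = k := by omega
    rw [hk1] at hsplitk
    have hEk : esymmErase (n' + 1) k i μ = esymm n' k ν := esymmErase_eq_esymm n' k i μ
    have hEk1 : esymmErase (n' + 1) (k - 1) i μ = 0 := hgt0
    have : esymm (n' + 1) k μ ≤ 0 := by
      rw [hsplitk, hEk, hEk1, mul_zero, add_zero]
      exact hkey
    have := hμΓ k (by omega) le_rfl
    linarith
  intro k hk1 hkn lam hlam i l hl1 hl2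
  have hsub : lam ∈ gammaPlus n (l + 1) := fun j hj1 hj2 => hlam j hj1 (by omega)
  have := hQ (l + 1) (by omega) (by omega) lam hsub i
  simpa using this

/-- If λ ∈ Γ⁺ₖ then Λᵢ ∈ Γ⁺_{k-1}(ℝ^{n-1}): σ_l(Λᵢ) > 0 for 1 ≤ l ≤ k-1. -/
theorem erase_mem_gammaPlus (n k : ℕ) (hk1 : 1 ≤ k) (hkn : k ≤ n)
    (lam : Fin n → ℝ) (hlam : lam ∈ gammaPlus n k) (i : Fin n) :
    ∀ l, 1 ≤ l → l ≤ k - 1 → 0 < esymmErase n l i lam := by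
  intro l hl1 hl2
  exact erasePos_all n k hk1 hkn lam hlam i l hl1 hl2
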